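/- For x ∈ [0,1], the identity x = 0·φ_{1,ω₀}(x) + 1·φ_{2,ω₀}(x) + 1·φ_{1,ω₀}(x−1) + 1·φ_{2,ω₀}(x−1) holds, i.e., the exponential Hermite pair reproduces the linear monomial on [0,1]. -/

import Mathlib

/-!
On `[0, 1]` the combination is `g₂ x + g₁ (1 - x) - g₂ (1 - x)` (the sign factor is harmless
because `g₂ 0 = 0`). Writing `ω x = ω/2 + θ` and `ω (1 - x) = ω/2 - θ`, the trigonometric part
of `g₂ x - g₂ (1 - x)` reduces to `sin θ / s`, since with `S = sin (ω/2)`, `C = cos (ω/2)` one has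
`u = -2 S s`, `v = 2 S (2 C + ω S)` and hence `ω² C + C u + S v = ω t`. This cancels the term
`sin (ω/2 - ω (1 - x)) / s = sin θ / s` of `g₁ (1 - x)`, and what is left is linear in `x` with
slope `(2 S - ω C) / s = 1`.
-/

open Real

theorem sin_eq_two_mul_sin_half_mul_cos_half (x : ℝ) :
    sin x = 2 * sin (x / 2) * cos (x / 2) := by
  rw [← sin_two_mul, mul_div_cancel₀ x two_ne_zero]

theorem cos_eq_cos_half_sq_sub_sin_half_sq (x : ℝ) :
    cos x = cos (x / 2) ^ 2 - sin (x / 2) ^ 2 := by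
  rw [← cos_two_mul', mul_div_cancel₀ x two_ne_zero]

theorem cos_eq_one_sub_two_mul_sin_half_sq (x : ℝ) : cos x = 1 - 2 * sin (x / 2) ^ 2 := by
  rw [← cos_two_mul_eq_one_sub, mul_div_cancel₀ x two_ne_zero]

theorem sign_mul_apply_abs_of_nonneg {g : ℝ → ℝ} (hg : g 0 = 0) {y : ℝ} (hy : 0 ≤ y) :
    sign y * g |y| = g y := by
  rcases hy.eq_or_lt with rfl | hy
  · rw [sign_zero, zero_mul, hg]
  · rw [sign_of_pos hy, abs_of_pos hy, one_mul]

theorem sign_mul_apply_abs_of_nonpos {g : ℝ → ℝ} (hg : g 0 = 0) {y : ℝ} (hy : y ≤ 0) :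
    sign y * g |y| = -g (-y) := by
  rcases hy.eq_or_lt with rfl | hy
  · rw [sign_zero, zero_mul, neg_zero, hg, neg_zero]
  · rw [sign_of_neg hy, abs_of_neg hy, neg_one_mul]

noncomputable section

def hermiteG₁ (ω s x : ℝ) : ℝ :=
  1 - sin (ω / 2) / s + (ω * cos (ω / 2) / s) * x + sin (ω / 2 - ω * x) / s

def hermiteG₂Numerator (ω u v x : ℝ) : ℝ :=
  ω ^ 2 * cos (ω / 2) * cos (ω * (1 - x)) + sin (ω / 2) * (sin (ω * x) * u - cos (ω * x) * v)

def hermiteG₂ (ω s t u v x : ℝ) : ℝ :=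
  (sin ω - ω * cos ω) / (ω * u) + (sin (ω / 2) / s) * x
    - hermiteG₂Numerator ω u v x / (2 * ω * sin (ω / 2) * s * t)

end

section

variable {ω s t u v : ℝ}

theorem hermite_u_eq_half_angle (hu : u = ω * sin ω - 2 * (1 - cos ω)) :
    u = -2 * sin (ω / 2) * (2 * sin (ω / 2) - ω * cos (ω / 2)) := by
  rw [hu, sin_eq_two_mul_sin_half_mul_cos_half ω, cos_eq_one_sub_two_mul_sin_half_sq ω]
  ring

theorem hermite_v_eq_half_angle (hv : v = 2 * sin ω + ω * (1 - cos ω)) :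
    v = 2 * sin (ω / 2) * (2 * cos (ω / 2) + ω * sin (ω / 2)) := by
  rw [hv, sin_eq_two_mul_sin_half_mul_cos_half ω, cos_eq_one_sub_two_mul_sin_half_sq ω]
  ring

theorem hermiteG₂Numerator_sub_hermiteG₂Numerator_one_sub (x : ℝ)
    (ht : t = 2 * sin (ω / 2) + ω * cos (ω / 2))
    (hu : u = ω * sin ω - 2 * (1 - cos ω)) (hv : v = 2 * sin ω + ω * (1 - cos ω)) :
    hermiteG₂Numerator ω u v x - hermiteG₂Numerator ω u v (1 - x)
      = 2 * ω * sin (ω / 2) * t * sin (ω * (x - 1 / 2)) := by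
  have hx : ω * x = ω / 2 + ω * (x - 1 / 2) := by ring
  have h1x : ω * (1 - x) = ω / 2 - ω * (x - 1 / 2) := by ring
  have h11x : ω * (1 - (1 - x)) = ω / 2 + ω * (x - 1 / 2) := by ring
  rw [hermiteG₂Numerator, hermiteG₂Numerator, hx, h1x, h11x, hermite_u_eq_half_angle hu,
    hermite_v_eq_half_angle hv, ht, sin_add, cos_add, sin_sub, cos_sub]
  linear_combination 4 * ω * sin (ω / 2) ^ 2 * sin (ω * (x - 1 / 2)) * sin_sq_add_cos_sq (ω / 2)

theorem hermiteG₂_sub_hermiteG₂_one_sub (x : ℝ) (hω : ω ≠ 0) (hS : sin (ω / 2) ≠ 0)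
    (hs0 : s ≠ 0) (ht0 : t ≠ 0) (ht : t = 2 * sin (ω / 2) + ω * cos (ω / 2))
    (hu : u = ω * sin ω - 2 * (1 - cos ω)) (hv : v = 2 * sin ω + ω * (1 - cos ω)) :
    hermiteG₂ ω s t u v x - hermiteG₂ ω s t u v (1 - x)
      = sin (ω / 2) / s * (2 * x - 1) - sin (ω * (x - 1 / 2)) / s := by
  calc hermiteG₂ ω s t u v x - hermiteG₂ ω s t u v (1 - x)
      = sin (ω / 2) / s * (2 * x - 1)
          - (hermiteG₂Numerator ω u v x - hermiteG₂Numerator ω u v (1 - x))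
            / (2 * ω * sin (ω / 2) * s * t) := by
        rw [hermiteG₂, hermiteG₂]; ring
    _ = _ := by
        rw [hermiteG₂Numerator_sub_hermiteG₂Numerator_one_sub x ht hu hv]
        field_simp

theorem hermiteG₂_add_hermiteG₁_one_sub_sub (x : ℝ) (hω : ω ≠ 0) (hS : sin (ω / 2) ≠ 0)
    (hs0 : s ≠ 0) (ht0 : t ≠ 0) (hs : s = 2 * sin (ω / 2) - ω * cos (ω / 2))
    (ht : t = 2 * sin (ω / 2) + ω * cos (ω / 2))
    (hu : u = ω * sin ω - 2 * (1 - cos ω)) (hv : v = 2 * sin ω + ω * (1 - cos ω)) :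
    hermiteG₂ ω s t u v x + hermiteG₁ ω s (1 - x) - hermiteG₂ ω s t u v (1 - x) = x := by
  have hs1 : (2 * sin (ω / 2) - ω * cos (ω / 2)) / s = 1 := by rw [← hs]; exact div_self hs0
  rw [hermiteG₁, show ω / 2 - ω * (1 - x) = ω * (x - 1 / 2) by ring]
  linear_combination hermiteG₂_sub_hermiteG₂_one_sub x hω hS hs0 ht0 ht hu hv + (x - 1) * hs1

theorem hermiteG₂_zero (hω : ω ≠ 0) (hS : sin (ω / 2) ≠ 0) (hs0 : s ≠ 0) (ht0 : t ≠ 0)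
    (hs : s = 2 * sin (ω / 2) - ω * cos (ω / 2)) (ht : t = 2 * sin (ω / 2) + ω * cos (ω / 2))
    (hu : u = ω * sin ω - 2 * (1 - cos ω)) (hv : v = 2 * sin ω + ω * (1 - cos ω)) :
    hermiteG₂ ω s t u v 0 = 0 := by
  have hu' := hermite_u_eq_half_angle hu
  rw [← hs] at hu'
  simp only [hermiteG₂, hermiteG₂Numerator, mul_zero, sub_zero, mul_one, sin_zero, cos_zero,
    zero_mul, zero_sub]
  rw [hu', hermite_v_eq_half_angle hv, sin_eq_two_mul_sin_half_mul_cos_half ω,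
    cos_eq_cos_half_sq_sub_sin_half_sq ω]
  field_simp
  rw [hs, ht]
  ring

end

theorem hermite_reproduces_linear_general (ω₀ : ℝ)
    (s t u v : ℝ)
    (hs : s = 2 * Real.sin (ω₀ / 2) - ω₀ * Real.cos (ω₀ / 2))
    (ht : t = 2 * Real.sin (ω₀ / 2) + ω₀ * Real.cos (ω₀ / 2))
    (hu : u = ω₀ * Real.sin ω₀ - 2 * (1 - Real.cos ω₀))
    (hv : v = 2 * Real.sin ω₀ + ω₀ * (1 - Real.cos ω₀))
    (hs0 : s ≠ 0) (ht0 : t ≠ 0) (hu0 : u ≠ 0)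
    (g₁ g₂ φ₁ φ₂ : ℝ → ℝ)
    (hg₁ : ∀ x, g₁ x = 1 - Real.sin (ω₀ / 2) / s + (ω₀ * Real.cos (ω₀ / 2) / s) * x
        + Real.sin (ω₀ / 2 - ω₀ * x) / s)
    (hg₂ : ∀ x, g₂ x = (Real.sin ω₀ - ω₀ * Real.cos ω₀) / (ω₀ * u)
        + (Real.sin (ω₀ / 2) / s) * x
        - (ω₀ ^ 2 * Real.cos (ω₀ / 2) * Real.cos (ω₀ * (1 - x))
            + Real.sin (ω₀ / 2) * (Real.sin (ω₀ * x) * u - Real.cos (ω₀ * x) * v))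
          / (2 * ω₀ * Real.sin (ω₀ / 2) * s * t))
    (hφ₁ : ∀ x, φ₁ x = Set.indicator (Set.Icc (-1 : ℝ) 1) (fun y => g₁ |y|) x)
    (hφ₂ : ∀ x, φ₂ x = Set.indicator (Set.Icc (-1 : ℝ) 1)
        (fun y => Real.sign y * g₂ |y|) x) :
    ∀ x ∈ Set.Icc (0 : ℝ) 1,
      x = 0 * φ₁ x + 1 * φ₂ x + 1 * φ₁ (x - 1) + 1 * φ₂ (x - 1) := by
  have hω : ω₀ ≠ 0 := by
    rintro rfl
    simp [hs] at hs0
  have hS : sin (ω₀ / 2) ≠ 0 := by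
    intro h
    rw [hermite_u_eq_half_angle hu, h] at hu0
    simp at hu0
  obtain rfl : g₁ = hermiteG₁ ω₀ s := funext hg₁
  obtain rfl : g₂ = hermiteG₂ ω₀ s t u v := funext hg₂
  have hz := hermiteG₂_zero hω hS hs0 ht0 hs ht hu hv
  rintro x ⟨hx0, hx1⟩
  have hx : x ∈ Set.Icc (-1 : ℝ) 1 := ⟨by linarith, hx1⟩
  have hx' : x - 1 ∈ Set.Icc (-1 : ℝ) 1 := ⟨by linarith, by linarith⟩
  rw [hφ₁ (x - 1), hφ₂ x, hφ₂ (x - 1), Set.indicator_of_mem hx', Set.indicator_of_mem hx,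
    Set.indicator_of_mem hx', sign_mul_apply_abs_of_nonneg hz hx0,
    sign_mul_apply_abs_of_nonpos hz (by linarith), abs_of_nonpos (by linarith), neg_sub]
  linear_combination -hermiteG₂_add_hermiteG₁_one_sub_sub x hω hS hs0 ht0 hs ht hu hv

theorem hermite_reproduces_linear (ω₀ : ℝ) (hω₀ : ω₀ ∈ Set.Ioo 0 π)
    (s t u v : ℝ)
    (hs : s = 2 * Real.sin (ω₀ / 2) - ω₀ * Real.cos (ω₀ / 2))
    (ht : t = 2 * Real.sin (ω₀ / 2) + ω₀ * Real.cos (ω₀ / 2))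
    (hu : u = ω₀ * Real.sin ω₀ - 2 * (1 - Real.cos ω₀))
    (hv : v = 2 * Real.sin ω₀ + ω₀ * (1 - Real.cos ω₀))
    (hs0 : s ≠ 0) (ht0 : t ≠ 0) (hu0 : u ≠ 0) (hv0 : v ≠ 0)
    (g₁ g₂ φ₁ φ₂ : ℝ → ℝ)
    (hg₁ : ∀ x, g₁ x = 1 - Real.sin (ω₀ / 2) / s + (ω₀ * Real.cos (ω₀ / 2) / s) * x
        + Real.sin (ω₀ / 2 - ω₀ * x) / s)
    (hg₂ : ∀ x, g₂ x = (Real.sin ω₀ - ω₀ * Real.cos ω₀) / (ω₀ * u)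
        + (Real.sin (ω₀ / 2) / s) * x
        - (ω₀ ^ 2 * Real.cos (ω₀ / 2) * Real.cos (ω₀ * (1 - x))
            + Real.sin (ω₀ / 2) * (Real.sin (ω₀ * x) * u - Real.cos (ω₀ * x) * v))
          / (2 * ω₀ * Real.sin (ω₀ / 2) * s * t))
    (hφ₁ : ∀ x, φ₁ x = Set.indicator (Set.Icc (-1 : ℝ) 1) (fun y => g₁ |y|) x)
    (hφ₂ : ∀ x, φ₂ x = Set.indicator (Set.Icc (-1 : ℝ) 1)
        (fun y => Real.sign y * g₂ |y|) x) :
    ∀ x ∈ Set.Icc (0 : ℝ) 1,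
      x = 0 * φ₁ x + 1 * φ₂ x + 1 * φ₁ (x - 1) + 1 * φ₂ (x - 1) :=
  hermite_reproduces_linear_general ω₀ s t u v hs ht hu hv hs0 ht0 hu0 g₁ g₂ φ₁ φ₂ hg₁ hg₂ hφ₁ hφ₂
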